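/- SSA hierarchy for pure Gaussian states (Theorem 2): Let n_A, n_B, n_C be positive integers, n = n_A + n_B + n_C, and let V be a 2n×2n real symmetric positive definite symplectic matrix (V J_n Vᵀ = J_n), the covariance matrix of a pure Gaussian state, partitioned into groups A, B, C of n_A, n_B, n_C modes. Suppose there exist: a 2n_A×2n_A real symplectic matrix S_A and a real ν ≥ 1 such that V_A = S_A D_A S_Aᵀ where D_A is the diagonal matrix with mode-wise symplectic spectrum (1, …, 1, ν) (each eigenvalue appearing twice, paired per mode); a 2n_B×2n_B real symplectic matrix S_B and reals β_1, …, β_{n_B} ≥ 1 with V_B = S_B D_B S_Bᵀ, D_B diagonal with mode-wise entries (β_1, β_1, …, β_{n_B}, β_{n_B}); and similarly a real symplectic S_C and γ_1, …, γ_{n_C} ≥ 1 with V_C = S_C D_C S_Cᵀ. Then the von Neumann entropies satisfy h(ν) ≤ Σ_{j=1}^{n_B} h(β_j) + Σ_{k=1}^{n_C} h(γ_k); that is, the strong subadditivity for the log-determinant implies the strong subadditivity of the von Neumann entropy for such states. -/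

import Mathlib

open Matrix

noncomputable section

/-- The 2×2 symplectic form σ = [[0,1],[-1,0]]. -/
def symp : Matrix (Fin 2) (Fin 2) ℝ := !![0, 1; -1, 0]

/-- The symplectic form on a system whose modes are indexed by `α`:
the direct sum of one copy of `σ` per mode. -/
def Jmat (α : Type*) [DecidableEq α] : Matrix (α × Fin 2) (α × Fin 2) ℝ :=
  fun p q => if p.1 = q.1 then symp p.2 q.2 else 0

/-- The von Neumann entropy contribution of a single symplectic eigenvalue
`ν ≥ 1`: `h(ν) = ((ν+1)/2)·log((ν+1)/2) − ((ν−1)/2)·log((ν−1)/2)` (with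
`h(1) = 0`). -/
noncomputable def hEnt (ν : ℝ) : ℝ :=
  ((ν + 1) / 2) * Real.log ((ν + 1) / 2) - ((ν - 1) / 2) * Real.log ((ν - 1) / 2)

/-!
For a pure state, V J V = J makes the complementary reduced covariance matrices V_A and
V_BC have equal determinants (Jacobi's identity for the minors of V⁻¹ = J V J⁻¹, together with
det V = 1), and Fischer's inequality gives det V_BC ≤ det V_B · det V_C.
Symplectic conjugation preserves determinants, so this reads ν² ≤ (∏ β_j)² (∏ γ_k)².
The entropy h is increasing on [1, ∞) and satisfies h(xy) ≤ h(x) + h(y) there, because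
x ↦ x h'(x) = (x/2) log((x+1)/(x-1)) is decreasing; hence h(ν) ≤ Σ h(β_j) + Σ h(γ_k).
-/

open Real Set

lemma Real.log_lt_sub_inv_div_two {u : ℝ} (hu : 1 < u) : log u < (u - u⁻¹) / 2 := by
  rw [← sinh_log (by linarith)]
  exact self_lt_sinh_iff.mpr (log_pos hu)

lemma hEnt_one : hEnt 1 = 0 := by simp [hEnt]

@[fun_prop]
lemma continuous_hEnt : Continuous hEnt :=
  (continuous_mul_log.comp (by fun_prop)).sub (continuous_mul_log.comp (by fun_prop))

lemma hasDerivAt_hEnt {x : ℝ} (hx : 1 < x) :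
    HasDerivAt hEnt (log ((x + 1) / (x - 1)) / 2) x := by
  have hp : (x + 1) / 2 ≠ 0 := by positivity
  have hm : (x - 1) / 2 ≠ 0 := (div_pos (sub_pos.mpr hx) two_pos).ne'
  refine (((hasDerivAt_mul_log hp).comp x (((hasDerivAt_id x).add_const 1).div_const 2)).sub
    ((hasDerivAt_mul_log hm).comp x (((hasDerivAt_id x).sub_const 1).div_const 2))).congr_deriv ?_
  rw [show (x + 1) / (x - 1) = ((x + 1) / 2) / ((x - 1) / 2) by field_simp, log_div hp hm]
  ring

lemma one_lt_add_one_div_sub_one {x : ℝ} (hx : 1 < x) : 1 < (x + 1) / (x - 1) := by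
  rw [lt_div_iff₀ (by linarith)]; linarith

lemma monotoneOn_hEnt : MonotoneOn hEnt (Ici 1) := by
  refine monotoneOn_of_hasDerivWithinAt_nonneg (f' := fun x => log ((x + 1) / (x - 1)) / 2)
    (convex_Ici 1) continuous_hEnt.continuousOn
    (fun x hx => ?_) (fun x hx => ?_) <;> rw [interior_Ici] at hx
  · exact (hasDerivAt_hEnt hx).hasDerivWithinAt
  · have := log_nonneg (one_lt_add_one_div_sub_one hx).le
    positivity

lemma antitoneOn_mul_log_div : AntitoneOn (fun x => x * log ((x + 1) / (x - 1))) (Ioi 1) := by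
  have hderiv : ∀ x ∈ Ioi (1 : ℝ), HasDerivAt (fun x => x * log ((x + 1) / (x - 1)))
      (log ((x + 1) / (x - 1)) - 2 * x / ((x + 1) * (x - 1))) x := by
    intro x hx
    have hm : x - 1 ≠ 0 := sub_ne_zero.mpr (ne_of_gt hx)
    have hp : x + 1 ≠ 0 := by linarith [mem_Ioi.mp hx]
    refine ((hasDerivAt_id x).mul ((((hasDerivAt_id x).add_const 1).div
      ((hasDerivAt_id x).sub_const 1) hm).log (div_ne_zero hp hm))).congr_deriv ?_
    simp only [id, Pi.div_apply]
    field_simp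
    ring
  refine antitoneOn_of_hasDerivWithinAt_nonpos
    (f' := fun x => log ((x + 1) / (x - 1)) - 2 * x / ((x + 1) * (x - 1))) (convex_Ioi 1)
    (fun x hx => (hderiv x hx).continuousAt.continuousWithinAt) (fun x hx => ?_) (fun x hx => ?_)
    <;> rw [interior_Ioi] at hx
  · exact (hderiv x hx).hasDerivWithinAt
  · have hm : x - 1 ≠ 0 := sub_ne_zero.mpr (ne_of_gt hx)
    have hp : x + 1 ≠ 0 := by linarith [mem_Ioi.mp hx]
    have key := log_lt_sub_inv_div_two (one_lt_add_one_div_sub_one hx)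
    have : ((x + 1) / (x - 1) - ((x + 1) / (x - 1))⁻¹) / 2 = 2 * x / ((x + 1) * (x - 1)) := by
      field_simp
      ring
    linarith

lemma hEnt_mul_le {x y : ℝ} (hx : 1 ≤ x) (hy : 1 ≤ y) : hEnt (x * y) ≤ hEnt x + hEnt y := by
  have hty {t : ℝ} (ht : t ∈ Ioi 1) : 1 < t * y := by nlinarith [mem_Ioi.mp ht]
  have hF : MonotoneOn (fun t => hEnt t + hEnt y - hEnt (t * y)) (Ici 1) := by
    refine monotoneOn_of_hasDerivWithinAt_nonneg
      (f' := fun t => log ((t + 1) / (t - 1)) / 2 - log ((t * y + 1) / (t * y - 1)) / 2 * y)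
      (convex_Ici 1) (by fun_prop) (fun t ht => ?_) (fun t ht => ?_)
      <;> rw [interior_Ici] at ht
    · exact (((hasDerivAt_hEnt ht).add_const _).sub
        ((hasDerivAt_hEnt (hty ht)).comp t (hasDerivAt_mul_const y))).hasDerivWithinAt
    · have ht0 : 0 < t := zero_lt_one.trans ht
      have key : t * y * log ((t * y + 1) / (t * y - 1)) ≤ t * log ((t + 1) / (t - 1)) :=
        antitoneOn_mul_log_div ht (hty ht) (le_mul_of_one_le_right ht0.le hy)
      have : y * log ((t * y + 1) / (t * y - 1)) ≤ log ((t + 1) / (t - 1)) :=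
        le_of_mul_le_mul_left (by rwa [← mul_assoc]) ht0
      linarith
  simpa [hEnt_one] using hF self_mem_Ici hx hx

lemma hEnt_prod_le {ι : Type*} (s : Finset ι) {f : ι → ℝ} (hf : ∀ i ∈ s, 1 ≤ f i) :
    hEnt (∏ i ∈ s, f i) ≤ ∑ i ∈ s, hEnt (f i) := by
  induction s using Finset.cons_induction with
  | empty => simp [hEnt_one]
  | cons a s _ ih =>
    rw [Finset.forall_mem_cons] at hf
    rw [Finset.prod_cons, Finset.sum_cons]
    exact (hEnt_mul_le hf.1 (Finset.one_le_prod hf.2)).trans (by gcongr; exact ih hf.2)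

namespace Matrix

variable {m n : Type*} [Fintype m] [Fintype n] [DecidableEq m] [DecidableEq n]

lemma PosSemidef.one_le_det_one_add {T : Matrix n n ℝ} (hT : T.PosSemidef) :
    1 ≤ (1 + T).det := by
  have hsa : IsSelfAdjoint T := hT.1.isSelfAdjoint
  have h1 : 1 + T = cfc (fun x : ℝ => 1 + x) T := by
    rw [cfc_const_add (1 : ℝ) (fun x : ℝ => x) T, cfc_id' ℝ T, Algebra.algebraMap_eq_smul_one,
      one_smul]
  rw [h1, hT.1.cfc_eq]
  simp only [IsHermitian.cfc, RCLike.ofReal_real_eq_id, CompTriple.comp_eq, det_map, det_diagonal,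
    Function.comp_apply]
  exact Finset.one_le_prod fun i _ => by linarith [hT.eigenvalues_nonneg i]

open scoped MatrixOrder in
lemma PosDef.det_le_det_add {P S : Matrix n n ℝ} (hP : P.PosDef) (hS : S.PosSemidef) :
    P.det ≤ (P + S).det := by
  set Q := CFC.sqrt P
  have hQQ : Q * Q = P := CFC.sqrt_mul_sqrt_self P hP.posSemidef.nonneg
  have hQH : Q.IsHermitian := (CFC.sqrt_nonneg P).posSemidef.1
  have hdetQ : Q.det * Q.det = P.det := by rw [← det_mul, hQQ]
  have hQu : IsUnit Q.det := (left_ne_zero_of_mul (hdetQ ▸ hP.det_pos.ne')).isUnit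
  have hT : (Q⁻¹ * S * Q⁻¹).PosSemidef := by
    have := hS.mul_mul_conjTranspose_same Q⁻¹
    rwa [conjTranspose_nonsing_inv, hQH.eq] at this
  have hsplit : P + S = Q * (1 + Q⁻¹ * S * Q⁻¹) * Q := by
    rw [Matrix.mul_add, Matrix.add_mul, Matrix.mul_one, hQQ, ← Matrix.mul_assoc,
      ← Matrix.mul_assoc, mul_nonsing_inv _ hQu, Matrix.one_mul, Matrix.mul_assoc,
      nonsing_inv_mul _ hQu, Matrix.mul_one]
  calc P.det = P.det * 1 := (mul_one _).symm
    _ ≤ P.det * (1 + Q⁻¹ * S * Q⁻¹).det := by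
        gcongr
        exacts [hP.det_pos.le, hT.one_le_det_one_add]
    _ = (P + S).det := by rw [hsplit, det_mul, det_mul, ← hdetQ]; ring

/-- Fischer's inequality. -/
lemma PosDef.det_le_det_toBlocks₁₁_mul_det_toBlocks₂₂ {M : Matrix (m ⊕ n) (m ⊕ n) ℝ}
    (hM : M.PosDef) : M.det ≤ M.toBlocks₁₁.det * M.toBlocks₂₂.det := by
  have hA : M.toBlocks₁₁.PosDef := hM.submatrix Sum.inl_injective
  let := M.toBlocks₁₁.invertibleOfIsUnitDet hA.det_pos.ne'.isUnit
  have hC : M.toBlocks₂₁ = M.toBlocks₁₂ᴴ := by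
    ext i j
    exact (hM.1.apply _ _).symm
  have hMb : M = fromBlocks M.toBlocks₁₁ M.toBlocks₁₂ M.toBlocks₁₂ᴴ M.toBlocks₂₂ := by
    rw [← hC, fromBlocks_toBlocks]
  set X := M.toBlocks₁₂ᴴ * M.toBlocks₁₁⁻¹ * M.toBlocks₁₂
  have hdet : M.det = M.toBlocks₁₁.det * (M.toBlocks₂₂ - X).det := by
    conv_lhs => rw [hMb]
    rw [det_fromBlocks₁₁, invOf_eq_nonsing_inv]
  have hX : X.PosSemidef := hA.inv.posSemidef.conjTranspose_mul_mul_same _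
  have hSchur : (M.toBlocks₂₂ - X).PosDef := by
    have hps := (PosDef.fromBlocks₁₁ _ _ hA).mp (hMb ▸ hM.posSemidef)
    exact hps.posDef_iff_det_ne_zero.mpr (right_ne_zero_of_mul (hdet ▸ hM.det_pos.ne'))
  rw [hdet]
  gcongr
  · exact hA.det_pos.le
  · simpa using hSchur.det_le_det_add hX

/-- Jacobi's complementary minor identity. -/
lemma det_mul_det_toBlocks₁₁_inv {R : Type*} [CommRing R] (M : Matrix (m ⊕ n) (m ⊕ n) R)
    [Invertible M] [Invertible M.toBlocks₂₂] :
    M.det * (M⁻¹).toBlocks₁₁.det = M.toBlocks₂₂.det := by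
  obtain ⟨A, B, C, D, rfl⟩ : ∃ A B C D, M = fromBlocks A B C D :=
    ⟨_, _, _, _, (fromBlocks_toBlocks M).symm⟩
  rw [toBlocks_fromBlocks₂₂] at *
  let := invertibleOfFromBlocks₂₂Invertible A B C D
  rw [← invOf_eq_nonsing_inv, invOf_fromBlocks₂₂_eq, toBlocks_fromBlocks₁₁, det_fromBlocks₂₂,
    mul_assoc, ← det_mul, mul_invOf_self, det_one, mul_one]

lemma PosDef.det_toBlocks₁₁_eq_det_toBlocks₂₂ {M : Matrix (m ⊕ n) (m ⊕ n) ℝ} (hM : M.PosDef)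
    {K₁ : Matrix m m ℝ} {K₂ : Matrix n n ℝ} (hK₁ : IsUnit K₁.det) (hK₂ : IsUnit K₂.det)
    (h : M * fromBlocks K₁ 0 0 K₂ * M = fromBlocks K₁ 0 0 K₂) :
    M.toBlocks₁₁.det = M.toBlocks₂₂.det := by
  set K : Matrix (m ⊕ n) (m ⊕ n) ℝ := fromBlocks K₁ 0 0 K₂
  have hK : IsUnit K.det := by rw [det_fromBlocks_zero₂₁]; exact hK₁.mul hK₂
  have hdetM : M.det = 1 := by
    have hsq : M.det * M.det = 1 := by
      have := congrArg det h
      rw [det_mul, det_mul] at this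
      exact mul_right_cancel₀ hK.ne_zero (by linear_combination this)
    nlinarith [hM.det_pos]
  have hMinv : M⁻¹ = K * M * K⁻¹ :=
    inv_eq_right_inv (by rw [← Matrix.mul_assoc, ← Matrix.mul_assoc, h, mul_nonsing_inv _ hK])
  have hKinv : K⁻¹ = fromBlocks K₁⁻¹ 0 0 K₂⁻¹ := by
    rw [inv_fromBlocks_zero₂₁_of_isUnit_iff _ _ _
      (iff_of_true ((isUnit_iff_isUnit_det _).mpr hK₁) ((isUnit_iff_isUnit_det _).mpr hK₂))]
    simp
  have h11 : (M⁻¹).toBlocks₁₁.det = M.toBlocks₁₁.det := by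
    rw [hMinv, hKinv, ← fromBlocks_toBlocks M]
    simp only [K, fromBlocks_multiply, toBlocks_fromBlocks₁₁, Matrix.zero_mul, Matrix.mul_zero,
      add_zero, det_mul, det_nonsing_inv, Ring.inverse_eq_inv']
    field_simp [hK₁.ne_zero]
  let := M.invertibleOfIsUnitDet (hdetM ▸ isUnit_one)
  let := M.toBlocks₂₂.invertibleOfIsUnitDet (hM.submatrix Sum.inr_injective).det_pos.ne'.isUnit
  rw [← h11, ← det_mul_det_toBlocks₁₁_inv, hdetM, one_mul]

end Matrix

lemma det_Jmat (α : Type*) [Fintype α] [DecidableEq α] : (Jmat α).det = 1 := by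
  have h : Jmat α = (blockDiagonal fun _ : α => symp).submatrix
      (Equiv.prodComm α (Fin 2)) (Equiv.prodComm α (Fin 2)) := by
    ext ⟨a, i⟩ ⟨b, j⟩
    by_cases hab : a = b <;> simp [Jmat, blockDiagonal_apply, hab]
  rw [h, det_submatrix_equiv_self, det_blockDiagonal]
  simp [symp, det_fin_two_of]

lemma det_mul_mul_transpose_of_symplectic {α : Type*} [Fintype α] [DecidableEq α]
    {S : Matrix (α × Fin 2) (α × Fin 2) ℝ} (hS : S * Jmat α * Sᵀ = Jmat α)
    (D : Matrix (α × Fin 2) (α × Fin 2) ℝ) : (S * D * Sᵀ).det = D.det := by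
  have hSS : S.det * S.det = 1 := by
    simpa [det_Jmat] using congrArg det hS
  rw [det_mul, det_mul, det_transpose, mul_right_comm, hSS, one_mul]

lemma det_diagonal_comp_fst {α ι R : Type*} [Fintype α] [Fintype ι] [DecidableEq α]
    [DecidableEq ι] [CommRing R] (d : α → R) :
    (diagonal fun p : α × ι => d p.1).det = (∏ a, d a) ^ Fintype.card ι := by
  simp [det_diagonal, Fintype.prod_prod_type, Finset.prod_pow]

lemma Fin.prod_ite_val_add_one_eq {M : Type*} [CommMonoid M] {n : ℕ} (hn : 0 < n) (x : M) :
    ∏ a : Fin n, (if (a : ℕ) + 1 = n then x else 1) = x := by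
  obtain ⟨k, rfl⟩ := Nat.exists_eq_add_one_of_ne_zero hn.ne'
  simp [Fin.prod_univ_castSucc, Fin.val_castSucc, (Fin.is_lt _).ne]

lemma Jmat_submatrix_sumProdDistrib_symm (α β : Type*) [DecidableEq α] [DecidableEq β] :
    (Jmat (α ⊕ β)).submatrix (Equiv.sumProdDistrib α β (Fin 2)).symm
      (Equiv.sumProdDistrib α β (Fin 2)).symm = fromBlocks (Jmat α) 0 0 (Jmat β) := by
  ext (⟨a, i⟩ | ⟨b, i⟩) (⟨a', j⟩ | ⟨b', j⟩) <;> simp [Jmat, Equiv.sumProdDistrib]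


namespace Matrix.PosDef

variable {α β : Type*} [Fintype α] [Fintype β] [DecidableEq α] [DecidableEq β]

lemma det_submatrix_inl_eq_det_submatrix_inr_of_symplectic
    {V : Matrix ((α ⊕ β) × Fin 2) ((α ⊕ β) × Fin 2) ℝ} (hV : V.PosDef)
    (hsymp : V * Jmat (α ⊕ β) * Vᵀ = Jmat (α ⊕ β)) :
    (V.submatrix (fun p : α × Fin 2 => (Sum.inl p.1, p.2))
      (fun p : α × Fin 2 => (Sum.inl p.1, p.2))).det =
    (V.submatrix (fun p : β × Fin 2 => (Sum.inr p.1, p.2))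
      (fun p : β × Fin 2 => (Sum.inr p.1, p.2))).det := by
  set e := (Equiv.sumProdDistrib α β (Fin 2)).symm
  have hVT : Vᵀ = V := by simpa using hV.1.eq
  have hW : V.submatrix e e * fromBlocks (Jmat α) 0 0 (Jmat β) * V.submatrix e e =
      fromBlocks (Jmat α) 0 0 (Jmat β) := by
    rw [hVT] at hsymp
    rw [← Jmat_submatrix_sumProdDistrib_symm, submatrix_mul_equiv, submatrix_mul_equiv, hsymp]
  exact (hV.submatrix e.injective).det_toBlocks₁₁_eq_det_toBlocks₂₂
    (by simp [det_Jmat]) (by simp [det_Jmat]) hW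

lemma det_le_det_submatrix_inl_mul_det_submatrix_inr {ι : Type*} [Fintype ι]
    [DecidableEq ι] {V : Matrix ((α ⊕ β) × ι) ((α ⊕ β) × ι) ℝ} (hV : V.PosDef) :
    V.det ≤ (V.submatrix (fun p : α × ι => (Sum.inl p.1, p.2))
      (fun p : α × ι => (Sum.inl p.1, p.2))).det *
    (V.submatrix (fun p : β × ι => (Sum.inr p.1, p.2))
      (fun p : β × ι => (Sum.inr p.1, p.2))).det := by
  set e := (Equiv.sumProdDistrib α β ι).symm
  rw [← det_submatrix_equiv_self e]
  exact (hV.submatrix e.injective).det_le_det_toBlocks₁₁_mul_det_toBlocks₂₂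

end Matrix.PosDef

theorem ssa_hierarchy_pure_gaussian_general (nA nB nC : ℕ)
    (hA : 0 < nA)
    (V : Matrix ((Fin nA ⊕ Fin nB ⊕ Fin nC) × Fin 2) ((Fin nA ⊕ Fin nB ⊕ Fin nC) × Fin 2) ℝ)
    (hpos : V.PosDef)
    (hsymp : V * Jmat (Fin nA ⊕ Fin nB ⊕ Fin nC) * Vᵀ = Jmat (Fin nA ⊕ Fin nB ⊕ Fin nC))
    -- the reduced state of A has symplectic spectrum (1, …, 1, ν)
    (SA : Matrix (Fin nA × Fin 2) (Fin nA × Fin 2) ℝ)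
    (hSA : SA * Jmat (Fin nA) * SAᵀ = Jmat (Fin nA))
    (ν : ℝ) (hν : 1 ≤ ν)
    (hVA : V.submatrix
        (fun p : Fin nA × Fin 2 => (Sum.inl p.1, p.2))
        (fun p : Fin nA × Fin 2 => (Sum.inl p.1, p.2))
      = SA * Matrix.diagonal (fun p : Fin nA × Fin 2 =>
          if (p.1 : ℕ) + 1 = nA then ν else 1) * SAᵀ)
    -- the reduced state of B has symplectic spectrum (β_1, …, β_{nB})
    (SB : Matrix (Fin nB × Fin 2) (Fin nB × Fin 2) ℝ)
    (hSB : SB * Jmat (Fin nB) * SBᵀ = Jmat (Fin nB))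
    (β : Fin nB → ℝ) (hβ : ∀ j, 1 ≤ β j)
    (hVB : V.submatrix
        (fun p : Fin nB × Fin 2 => (Sum.inr (Sum.inl p.1), p.2))
        (fun p : Fin nB × Fin 2 => (Sum.inr (Sum.inl p.1), p.2))
      = SB * Matrix.diagonal (fun p : Fin nB × Fin 2 => β p.1) * SBᵀ)
    -- the reduced state of C has symplectic spectrum (γ_1, …, γ_{nC})
    (SC : Matrix (Fin nC × Fin 2) (Fin nC × Fin 2) ℝ)
    (hSC : SC * Jmat (Fin nC) * SCᵀ = Jmat (Fin nC))
    (γ : Fin nC → ℝ) (hγ : ∀ k, 1 ≤ γ k)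
    (hVC : V.submatrix
        (fun p : Fin nC × Fin 2 => (Sum.inr (Sum.inr p.1), p.2))
        (fun p : Fin nC × Fin 2 => (Sum.inr (Sum.inr p.1), p.2))
      = SC * Matrix.diagonal (fun p : Fin nC × Fin 2 => γ p.1) * SCᵀ) :
    hEnt ν ≤ (∑ j, hEnt (β j)) + ∑ k, hEnt (γ k) := by
  set VBC := V.submatrix (fun p : (Fin nB ⊕ Fin nC) × Fin 2 => (Sum.inr p.1, p.2))
    (fun p : (Fin nB ⊕ Fin nC) × Fin 2 => (Sum.inr p.1, p.2))
  have hpure : ν ^ 2 = VBC.det := by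
    have := hpos.det_submatrix_inl_eq_det_submatrix_inr_of_symplectic hsymp
    rwa [hVA, det_mul_mul_transpose_of_symplectic hSA,
      det_diagonal_comp_fst fun a : Fin nA => if (a : ℕ) + 1 = nA then ν else 1,
      Fin.prod_ite_val_add_one_eq hA, Fintype.card_fin] at this
  have hfischer : VBC.det ≤ (∏ j, β j) ^ 2 * (∏ k, γ k) ^ 2 := by
    have hBC : VBC.PosDef := hpos.submatrix (Sum.inr_injective.prodMap Function.injective_id)
    have := hBC.det_le_det_submatrix_inl_mul_det_submatrix_inr
    simp only [VBC, submatrix_submatrix, Function.comp_def] at this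
    rwa [hVB, hVC, det_mul_mul_transpose_of_symplectic hSB, det_mul_mul_transpose_of_symplectic hSC,
      det_diagonal_comp_fst β, det_diagonal_comp_fst γ, Fintype.card_fin] at this
  have hβ1 : 1 ≤ ∏ j, β j := Finset.one_le_prod fun j _ => hβ j
  have hγ1 : 1 ≤ ∏ k, γ k := Finset.one_le_prod fun k _ => hγ k
  have hle : ν ≤ (∏ j, β j) * ∏ k, γ k :=
    (pow_le_pow_iff_left₀ (by linarith) (by positivity) two_ne_zero).mp
      (by rw [mul_pow]; exact hpure.trans_le hfischer)
  calc hEnt ν ≤ hEnt ((∏ j, β j) * ∏ k, γ k) :=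
        monotoneOn_hEnt hν (one_le_mul_of_one_le_of_one_le hβ1 hγ1) hle
    _ ≤ hEnt (∏ j, β j) + hEnt (∏ k, γ k) := hEnt_mul_le hβ1 hγ1
    _ ≤ (∑ j, hEnt (β j)) + ∑ k, hEnt (γ k) :=
        add_le_add (hEnt_prod_le _ fun j _ => hβ j) (hEnt_prod_le _ fun k _ => hγ k)

/-- **SSA hierarchy for pure Gaussian states (Theorem 2).** Let `V` be the
covariance matrix of a pure Gaussian state of `nA + nB + nC` modes (real
symmetric positive definite and symplectic, `V Jₙ Vᵀ = Jₙ`), partitioned into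
groups `A`, `B`, `C`. Suppose the reduced covariance matrix `V_A` has mode-wise
symplectic spectrum `(1, …, 1, ν)` (witnessed by a symplectic `S_A` with
`V_A = S_A D_A S_Aᵀ`), and `V_B`, `V_C` have mode-wise symplectic spectra
`(β_j)`, `(γ_k)` (witnessed by symplectic `S_B`, `S_C` respectively). Then the
von Neumann entropies satisfy `h(ν) ≤ ∑ j, h(β_j) + ∑ k, h(γ_k)`:
strong subadditivity for the log-determinant implies strong subadditivity of
the von Neumann entropy for such states. -/
theorem ssa_hierarchy_pure_gaussian (nA nB nC : ℕ)
    (hA : 0 < nA) (hB : 0 < nB) (hC : 0 < nC)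
    (V : Matrix ((Fin nA ⊕ Fin nB ⊕ Fin nC) × Fin 2) ((Fin nA ⊕ Fin nB ⊕ Fin nC) × Fin 2) ℝ)
    (hsymm : V.IsSymm) (hpos : V.PosDef)
    (hsymp : V * Jmat (Fin nA ⊕ Fin nB ⊕ Fin nC) * Vᵀ = Jmat (Fin nA ⊕ Fin nB ⊕ Fin nC))
    -- the reduced state of A has symplectic spectrum (1, …, 1, ν)
    (SA : Matrix (Fin nA × Fin 2) (Fin nA × Fin 2) ℝ)
    (hSA : SA * Jmat (Fin nA) * SAᵀ = Jmat (Fin nA))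
    (ν : ℝ) (hν : 1 ≤ ν)
    (hVA : V.submatrix
        (fun p : Fin nA × Fin 2 => (Sum.inl p.1, p.2))
        (fun p : Fin nA × Fin 2 => (Sum.inl p.1, p.2))
      = SA * Matrix.diagonal (fun p : Fin nA × Fin 2 =>
          if (p.1 : ℕ) + 1 = nA then ν else 1) * SAᵀ)
    -- the reduced state of B has symplectic spectrum (β_1, …, β_{nB})
    (SB : Matrix (Fin nB × Fin 2) (Fin nB × Fin 2) ℝ)
    (hSB : SB * Jmat (Fin nB) * SBᵀ = Jmat (Fin nB))
    (β : Fin nB → ℝ) (hβ : ∀ j, 1 ≤ β j)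
    (hVB : V.submatrix
        (fun p : Fin nB × Fin 2 => (Sum.inr (Sum.inl p.1), p.2))
        (fun p : Fin nB × Fin 2 => (Sum.inr (Sum.inl p.1), p.2))
      = SB * Matrix.diagonal (fun p : Fin nB × Fin 2 => β p.1) * SBᵀ)
    -- the reduced state of C has symplectic spectrum (γ_1, …, γ_{nC})
    (SC : Matrix (Fin nC × Fin 2) (Fin nC × Fin 2) ℝ)
    (hSC : SC * Jmat (Fin nC) * SCᵀ = Jmat (Fin nC))
    (γ : Fin nC → ℝ) (hγ : ∀ k, 1 ≤ γ k)
    (hVC : V.submatrix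
        (fun p : Fin nC × Fin 2 => (Sum.inr (Sum.inr p.1), p.2))
        (fun p : Fin nC × Fin 2 => (Sum.inr (Sum.inr p.1), p.2))
      = SC * Matrix.diagonal (fun p : Fin nC × Fin 2 => γ p.1) * SCᵀ) :
    hEnt ν ≤ (∑ j, hEnt (β j)) + ∑ k, hEnt (γ k) :=
  ssa_hierarchy_pure_gaussian_general nA nB nC hA V hpos hsymp SA hSA ν hν hVA SB hSB β hβ hVB SC
    hSC γ hγ hVC

end
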